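/- Let G be a signed digraph on a finite vertex set V with |V| = n and without positive cycles, and let f be a Boolean network on G that has a fixed point. Then f has a synchronizing word of length n. -/

import Mathlib

/-- A signed digraph on vertex set `V`, given by its positive and negative arc relations. -/
structure SignedDigraph (V : Type*) where
  pos : V → V → Prop
  neg : V → V → Prop

/-- The last vertex of a walk starting at `u` with the given steps. -/
def walkEnd {V : Type*} (u : V) (steps : List (V × Bool)) : V :=
  (steps.map Prod.fst).getLastD u

/-- The sign of a walk (`true` = positive): positive iff the number of
negative (`false`) arcs is even. -/
def walkSign {V : Type*} (steps : List (V × Bool)) : Bool :=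
  steps.foldl (fun acc step => acc == step.2) true

namespace SignedDigraph

variable {V : Type*}

/-- Arc of the underlying digraph. -/
def Arc (G : SignedDigraph V) (j i : V) : Prop := G.pos j i ∨ G.neg j i

/-- `G.IsWalk u steps`: `steps` is a list of (next vertex, sign of arc) pairs
describing a walk in `G` starting at `u`. -/
def IsWalk (G : SignedDigraph V) : V → List (V × Bool) → Prop
  | _, [] => True
  | u, step :: rest =>
      (if step.2 then G.pos u step.1 else G.neg u step.1) ∧ G.IsWalk step.1 rest

/-- A (simple) path from `u`: a walk with pairwise distinct vertices. -/
def IsPath (G : SignedDigraph V) (u : V) (steps : List (V × Bool)) : Prop :=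
  G.IsWalk u steps ∧ (u :: steps.map Prod.fst).Nodup

/-- A (simple) path from `u` to `v`. -/
def IsPathFrom (G : SignedDigraph V) (u : V) (steps : List (V × Bool)) (v : V) : Prop :=
  G.IsPath u steps ∧ walkEnd u steps = v

/-- A cycle through `u`: a nonempty closed walk from `u` back to `u` with no repeated
vertex except the endpoint. -/
def IsCycle (G : SignedDigraph V) (u : V) (steps : List (V × Bool)) : Prop :=
  steps ≠ [] ∧ G.IsWalk u steps ∧ walkEnd u steps = u ∧
    (u :: (steps.map Prod.fst).dropLast).Nodup

/-- `G` has no positive cycle. -/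
def NoPositiveCycle (G : SignedDigraph V) : Prop :=
  ∀ u steps, G.IsCycle u steps → walkSign steps = false

/-- `G` has no negative cycle. -/
def NoNegativeCycle (G : SignedDigraph V) : Prop :=
  ∀ u steps, G.IsCycle u steps → walkSign steps = true

/-- Reachability in the underlying digraph. -/
def Reach (G : SignedDigraph V) (u v : V) : Prop :=
  ∃ steps, G.IsWalk u steps ∧ walkEnd u steps = v

/-- The underlying digraph of `G` is strongly connected. -/
def StronglyConnected (G : SignedDigraph V) : Prop := ∀ u v, G.Reach u v

/-- `u` and `v` lie in the same strong component. -/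
def SameComp (G : SignedDigraph V) (u v : V) : Prop := G.Reach u v ∧ G.Reach v u

/-- The strong component of `u`. -/
def comp (G : SignedDigraph V) (u : V) : Set V := {v | G.SameComp u v}

/-- The in-degree of `i`: the number of arcs (with their signs) entering `i`. -/
noncomputable def inDegree (G : SignedDigraph V) (i : V) : ℕ :=
  {j | G.pos j i}.ncard + {j | G.neg j i}.ncard

/-- A source: a vertex with no in-coming arc. -/
def IsSource (G : SignedDigraph V) (i : V) : Prop := ∀ j, ¬ G.Arc j i

/-- `G` has no sources. -/
def NoSource (G : SignedDigraph V) : Prop := ∀ i, ¬ G.IsSource i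

/-- The subgraph induced on a set `S` of vertices. -/
def induce (G : SignedDigraph V) (S : Set V) : SignedDigraph V where
  pos j i := j ∈ S ∧ i ∈ S ∧ G.pos j i
  neg j i := j ∈ S ∧ i ∈ S ∧ G.neg j i

/-- The underlying digraph of `G` restricted to `S` is a cycle: `S` is nonempty,
every vertex of `S` has exactly one in-coming arc inside `S`, and `S` is strongly
connected inside `S`. -/
def IsCycleGraphOn (G : SignedDigraph V) (S : Set V) : Prop :=
  S.Nonempty ∧ (∀ i ∈ S, (G.induce S).inDegree i = 1) ∧
    ∀ u ∈ S, ∀ v ∈ S, (G.induce S).Reach u v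

/-- The underlying digraph of `G` is a cycle. -/
def IsCycleGraph (G : SignedDigraph V) : Prop := G.IsCycleGraphOn Set.univ

/-- `S` is an initial strong component of `G`. -/
def IsInitialComponent (G : SignedDigraph V) (S : Set V) : Prop :=
  (∃ u, S = G.comp u) ∧ ∀ j i, i ∈ S → G.Arc j i → j ∈ S

/-- `G` has an initial cycle: an initial strong component whose underlying digraph
is a cycle. -/
def HasInitialCycle (G : SignedDigraph V) : Prop :=
  ∃ S : Set V, G.IsInitialComponent S ∧ G.IsCycleGraphOn S

/-- A forward path: a nonempty path whose last arc joins two distinct strong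
components. -/
def IsForwardPath (G : SignedDigraph V) (u : V) (steps : List (V × Bool)) (v : V) : Prop :=
  G.IsPathFrom u steps v ∧ steps ≠ [] ∧ ¬ G.SameComp (walkEnd u steps.dropLast) v

/-- `G` is `i`-homogenous: every strong component contains a vertex `j` such that
all forward paths from `j` to `i` have the same sign. -/
def IsHomogenousAt (G : SignedDigraph V) (i : V) : Prop :=
  ∀ u : V, ∃ j, G.SameComp u j ∧
    ∀ steps₁ steps₂, G.IsForwardPath j steps₁ i → G.IsForwardPath j steps₂ i →
      walkSign steps₁ = walkSign steps₂

/-- `G` is homogenous. -/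
def IsHomogenous (G : SignedDigraph V) : Prop := ∀ i, G.IsHomogenousAt i

/-- `G` is simple: no pair of parallel arcs of opposite signs. -/
def IsSimple (G : SignedDigraph V) : Prop := ∀ j i, ¬ (G.pos j i ∧ G.neg j i)

end SignedDigraph

section BooleanNetwork

variable {V : Type*} [DecidableEq V]

/-- Asynchronous update of component `i` of the Boolean network `f`. -/
def localUpdate (f : (V → Bool) → V → Bool) (i : V) (x : V → Bool) : V → Bool :=
  Function.update x i (f x i)

/-- `f^w` : for `w = i₁,…,i_ℓ`, `wordUpdate f w = f^{i_ℓ} ∘ ⋯ ∘ f^{i₁}`. -/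
def wordUpdate (f : (V → Bool) → V → Bool) (w : List V) (x : V → Bool) : V → Bool :=
  w.foldl (fun y i => localUpdate f i y) x

/-- `w` is a synchronizing word for `f`: `f^w` is constant. -/
def SyncWord (f : (V → Bool) → V → Bool) (w : List V) : Prop :=
  ∃ c : V → Bool, ∀ x, wordUpdate f w x = c

/-- `f` is synchronizing. -/
def Synchronizing (f : (V → Bool) → V → Bool) : Prop := ∃ w, SyncWord f w

/-- Positive arc of the signed interaction digraph of `f`. -/
def posIArc (f : (V → Bool) → V → Bool) (j i : V) : Prop :=
  ∃ x : V → Bool, x j = false ∧ f x i = false ∧ f (Function.update x j true) i = true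

/-- Negative arc of the signed interaction digraph of `f`. -/
def negIArc (f : (V → Bool) → V → Bool) (j i : V) : Prop :=
  ∃ x : V → Bool, x j = false ∧ f x i = true ∧ f (Function.update x j true) i = false

/-- `f` is a Boolean network on `G`: the signed interaction digraph of `f` is `G`. -/
def IsBNOn (f : (V → Bool) → V → Bool) (G : SignedDigraph V) : Prop :=
  (∀ j i, G.pos j i ↔ posIArc f j i) ∧ (∀ j i, G.neg j i ↔ negIArc f j i)

/-- Component `i` of `f` is a conjunction with respect to `G`. -/
def IsConjunction (G : SignedDigraph V) (f : (V → Bool) → V → Bool) (i : V) : Prop :=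
  ∀ x : V → Bool, (f x i = true ↔
    (∀ j, G.pos j i → x j = true) ∧ (∀ j, G.neg j i → x j = false))

/-- Component `i` of `f` is a disjunction with respect to `G`. -/
def IsDisjunction (G : SignedDigraph V) (f : (V → Bool) → V → Bool) (i : V) : Prop :=
  ∀ x : V → Bool, (f x i = false ↔
    (∀ j, G.pos j i → x j = false) ∧ (∀ j, G.neg j i → x j = true))

/-- `f` is an and-or-net on `G`. -/
def IsAndOrNet (G : SignedDigraph V) (f : (V → Bool) → V → Bool) : Prop :=
  IsBNOn f G ∧ ∀ i, IsConjunction G f i ∨ IsDisjunction G f i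

/-- `f` is the and-net on `G`. -/
def IsAndNet (G : SignedDigraph V) (f : (V → Bool) → V → Bool) : Prop :=
  IsBNOn f G ∧ ∀ i, IsConjunction G f i

/-- `w` is a canalizing word from `(i, a)` with image `b`. -/
def Canalizing (f : (V → Bool) → V → Bool) (i : V) (a : Bool) (w : List V)
    (b : V → Bool) : Prop :=
  i ∉ w ∧ w.Nodup ∧ ∀ x : V → Bool, x i = a → ∀ j ∈ w, wordUpdate f w x j = b j

end BooleanNetwork

/-!
Fix a fixed point `a` of `f`. Call a component `i` of a set `D` of free components *forced* if
`fᵢ x = aᵢ` for every `x` agreeing with `a` outside `D`. If no component of a nonempty `D` were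
forced, then, flipping the coordinates of a counterexample back to `a` one at a time, every
`i ∈ D` would receive an arc `j → i` from some `j ∈ D` that is not frustrated by `a` (positive iff
`aⱼ = aᵢ`). Following such arcs backwards yields a cycle, and the sign of a walk of unfrustrated
arcs telescopes to `a u == a v` for its endpoints, so this cycle is positive. Hence updating
forced components one after another sends every configuration to `a` in `n` steps.
-/

open Function

theorem exists_mem_periodicPts_of_mapsTo {α : Type*} [Finite α] {φ : α → α} {S : Set α}
    (hφ : Set.MapsTo φ S S) (hS : S.Nonempty) : ∃ u ∈ S, u ∈ periodicPts φ := by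
  obtain ⟨i, hi⟩ := hS
  obtain ⟨p, q, hpq, hpq_eq⟩ := Finite.exists_ne_map_eq_of_infinite (fun m => φ^[m] i)
  wlog hlt : p < q generalizing p q
  · exact this q p hpq.symm hpq_eq.symm (by omega)
  refine ⟨φ^[p] i, hφ.iterate p hi, mk_mem_periodicPts (n := q - p) (by omega) ?_⟩
  rw [IsPeriodicPt, IsFixedPt, ← iterate_add_apply, Nat.sub_add_cancel hlt.le]
  exact hpq_eq.symm

namespace SignedDigraph

variable {V : Type*}

theorem walkEnd_cons (u : V) (step : V × Bool) (rest : List (V × Bool)) :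
    walkEnd u (step :: rest) = walkEnd step.1 rest :=
  List.getLastD_cons

theorem IsWalk.mono {G H : SignedDigraph V} (hpos : H.pos ≤ G.pos) (hneg : H.neg ≤ G.neg) :
    ∀ {u : V} {steps : List (V × Bool)}, H.IsWalk u steps → G.IsWalk u steps
  | _, [], _ => trivial
  | u, (v, s) :: _, ⟨harc, hrest⟩ => by
    refine ⟨?_, hrest.mono hpos hneg⟩
    cases s
    · exact hneg u v harc
    · exact hpos u v harc

theorem IsCycle.mono {G H : SignedDigraph V} (hpos : H.pos ≤ G.pos) (hneg : H.neg ≤ G.neg)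
    {u : V} {steps : List (V × Bool)} (h : H.IsCycle u steps) : G.IsCycle u steps :=
  ⟨h.1, h.2.1.mono hpos hneg, h.2.2⟩

theorem isCycle_of_nodup {G : SignedDigraph V} {u : V} {steps : List (V × Bool)}
    (hne : steps ≠ []) (hwalk : G.IsWalk u steps) (hend : walkEnd u steps = u)
    (hnodup : (steps.map Prod.fst).Nodup) : G.IsCycle u steps := by
  refine ⟨hne, hwalk, hend, ?_⟩
  have hl : steps.map Prod.fst ≠ [] := by simpa using hne
  have hlast : (steps.map Prod.fst).getLast hl = u := by
    rw [← hend, walkEnd, List.getLastD_eq_getLast?, List.getLast?_eq_some_getLast hl]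
    rfl
  have hperm : (u :: (steps.map Prod.fst).dropLast).Perm (steps.map Prod.fst) := by
    conv_rhs => rw [← List.dropLast_append_getLast hl, hlast]
    exact (List.perm_append_singleton _ _).symm
  exact hperm.nodup_iff.mpr hnodup

/-- The walk `φ^[m] u → φ^[m-1] u → ⋯ → u`, where `σ v` is the sign of the arc `φ v → v`. -/
def backwardWalk (φ : V → V) (σ : V → Bool) (u : V) : ℕ → List (V × Bool)
  | 0 => []
  | m + 1 => (φ^[m] u, σ (φ^[m] u)) :: backwardWalk φ σ u m

section backwardWalk

variable (φ : V → V) (σ : V → Bool) (u : V)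

theorem isWalk_backwardWalk {G : SignedDigraph V} {S : Set V} (hφ : Set.MapsTo φ S S)
    (hσ : ∀ v ∈ S, if σ v then G.pos (φ v) v else G.neg (φ v) v) (hu : u ∈ S) :
    ∀ m, G.IsWalk (φ^[m] u) (backwardWalk φ σ u m)
  | 0 => trivial
  | m + 1 => by
    rw [iterate_succ_apply']
    exact ⟨hσ _ (hφ.iterate m hu), isWalk_backwardWalk hφ hσ hu m⟩

theorem walkEnd_backwardWalk : ∀ m, walkEnd (φ^[m] u) (backwardWalk φ σ u m) = u
  | 0 => rfl
  | m + 1 => by rw [backwardWalk, walkEnd_cons]; exact walkEnd_backwardWalk m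

theorem mem_backwardWalk_iff {v : V} :
    ∀ {m}, v ∈ (backwardWalk φ σ u m).map Prod.fst ↔ ∃ t < m, φ^[t] u = v
  | 0 => by simp [backwardWalk]
  | m + 1 => by
    rw [backwardWalk, List.map_cons, List.mem_cons, mem_backwardWalk_iff]
    constructor
    · rintro (rfl | ⟨t, ht, rfl⟩)
      exacts [⟨m, m.lt_succ_self, rfl⟩, ⟨t, by omega, rfl⟩]
    · rintro ⟨t, ht, rfl⟩
      rcases Nat.lt_succ_iff_lt_or_eq.mp ht with ht | rfl
      exacts [Or.inr ⟨t, ht, rfl⟩, Or.inl rfl]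

theorem nodup_backwardWalk : ∀ {m}, m ≤ minimalPeriod φ u →
    ((backwardWalk φ σ u m).map Prod.fst).Nodup
  | 0, _ => List.nodup_nil
  | m + 1, hm => by
    rw [backwardWalk, List.map_cons, List.nodup_cons, mem_backwardWalk_iff]
    refine ⟨?_, nodup_backwardWalk (by omega)⟩
    rintro ⟨t, ht, heq⟩
    have := iterate_injOn_Iio_minimalPeriod (Set.mem_Iio.mpr (by omega : t < minimalPeriod φ u))
      (Set.mem_Iio.mpr (by omega : m < minimalPeriod φ u)) heq
    omega

end backwardWalk

theorem exists_isCycle_of_forall_exists_arc [Finite V] (G : SignedDigraph V) {S : Set V}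
    (hS : S.Nonempty) (harc : ∀ i ∈ S, ∃ j ∈ S, G.Arc j i) : ∃ u steps, G.IsCycle u steps := by
  have hpred : ∀ i, ∃ p : V × Bool, i ∈ S → p.1 ∈ S ∧
      if p.2 then G.pos p.1 i else G.neg p.1 i := by
    intro i
    by_cases hi : i ∈ S
    · obtain ⟨j, hj, hpos | hneg⟩ := harc i hi
      exacts [⟨(j, true), fun _ => ⟨hj, hpos⟩⟩, ⟨(j, false), fun _ => ⟨hj, hneg⟩⟩]
    · exact ⟨(i, true), fun h => absurd h hi⟩
  choose pred hpred using hpred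
  set φ : V → V := fun i => (pred i).1
  set σ : V → Bool := fun i => (pred i).2
  have hφ : Set.MapsTo φ S S := fun i hi => (hpred i hi).1
  obtain ⟨u, hu, hper⟩ := exists_mem_periodicPts_of_mapsTo hφ hS
  set k := minimalPeriod φ u
  have hk : 0 < k := minimalPeriod_pos_of_mem_periodicPts hper
  refine ⟨u, backwardWalk φ σ u k, isCycle_of_nodup ?_ ?_ ?_ (nodup_backwardWalk φ σ u le_rfl)⟩
  · obtain ⟨m, hm⟩ := Nat.exists_eq_add_of_lt hk
    rw [hm, backwardWalk]
    exact List.cons_ne_nil _ _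
  · have hwalk := isWalk_backwardWalk φ σ u hφ (fun v hv => (hpred v hv).2) hu k
    rwa [iterate_minimalPeriod] at hwalk
  · have hend := walkEnd_backwardWalk φ σ u k
    rwa [iterate_minimalPeriod] at hend

def unfrustrated (G : SignedDigraph V) (x : V → Bool) : SignedDigraph V where
  pos j i := G.pos j i ∧ x j = x i
  neg j i := G.neg j i ∧ x j ≠ x i

theorem foldl_sign_of_isWalk_unfrustrated {G : SignedDigraph V} {x : V → Bool} :
    ∀ {u : V} {steps : List (V × Bool)} (b : Bool), (G.unfrustrated x).IsWalk u steps →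
      steps.foldl (fun acc step => acc == step.2) b = (b == (x u == x (walkEnd u steps)))
  | _, [], b, _ => by cases b <;> simp [walkEnd]
  | u, (v, s) :: rest, b, ⟨harc, hrest⟩ => by
    have hs : s = (x u == x v) := by
      cases s <;> simp_all [unfrustrated]
    rw [List.foldl_cons, foldl_sign_of_isWalk_unfrustrated (b == s) hrest, walkEnd_cons, hs]
    cases b <;> cases x u <;> cases x v <;> cases x (walkEnd v rest) <;> rfl

theorem walkSign_of_isWalk_unfrustrated {G : SignedDigraph V} {x : V → Bool} {u : V}
    {steps : List (V × Bool)} (h : (G.unfrustrated x).IsWalk u steps) :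
    walkSign steps = (x u == x (walkEnd u steps)) := by
  rw [walkSign, foldl_sign_of_isWalk_unfrustrated true h, Bool.true_beq]

theorem NoPositiveCycle.not_isCycle_unfrustrated {G : SignedDigraph V} (hG : G.NoPositiveCycle)
    (x : V → Bool) (u : V) (steps : List (V × Bool)) : ¬ (G.unfrustrated x).IsCycle u steps := by
  intro h
  have hsign := walkSign_of_isWalk_unfrustrated h.2.1
  rw [h.2.2.1, hG u steps (h.mono (H := G.unfrustrated x) (fun _ _ h => h.1) (fun _ _ h => h.1))]
    at hsign
  simp at hsign

end SignedDigraph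

section BooleanNetwork

variable {V : Type*} [DecidableEq V]

theorem exists_update_ne_of_ne {β : Type*} (g : (V → Bool) → β) (y : V → Bool)
    (D : Finset V) : ∀ x : V → Bool, (∀ k ∉ D, x k = y k) → g x ≠ g y →
      ∃ j ∈ D, ∃ z : V → Bool, (∀ k ∉ D, z k = y k) ∧ z j = y j ∧ g z = g y ∧
        g (update z j (!y j)) ≠ g y := by
  induction D using Finset.induction_on with
  | empty =>
    intro x hx hne
    exact absurd (congrArg g (funext fun k => hx k (Finset.notMem_empty k))) hne
  | insert d D hd ih =>
    intro x hx hne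
    by_cases hx' : g (update x d (y d)) = g y
    · have hxd : x d = !y d := by
        refine Bool.eq_not_of_ne fun hxd => hne ?_
        rwa [← hxd, update_eq_self] at hx'
      refine ⟨d, Finset.mem_insert_self d D, update x d (y d), fun k hk => ?_,
        update_self .., hx', ?_⟩
      · rw [Finset.mem_insert, not_or] at hk
        rw [update_of_ne hk.1]
        exact hx k (by simp [hk.1, hk.2])
      · rwa [update_idem, ← hxd, update_eq_self]
    · have hx'D : ∀ k ∉ D, update x d (y d) k = y k := fun k hk => by
        by_cases hkd : k = d
        · rw [hkd, update_self]
        · rw [update_of_ne hkd]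
          exact hx k (by simp [hkd, hk])
      obtain ⟨j, hj, z, hz, hzj, hgz, hflip⟩ := ih (update x d (y d)) hx'D hx'
      exact ⟨j, Finset.mem_insert_of_mem hj, z,
        fun k hk => hz k fun h => hk (Finset.mem_insert_of_mem h), hzj, hgz, hflip⟩

variable {G : SignedDigraph V} {f : (V → Bool) → V → Bool}

theorem unfrustrated_arc_of_update (hf : IsBNOn f G) {x z : V → Bool} {i j : V}
    (hzj : z j = x j) (hzi : f z i = x i) (hflip : f (update z j (!x j)) i ≠ x i) :
    (G.unfrustrated x).Arc j i := by
  have hflip' := Bool.eq_not_of_ne hflip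
  cases hxj : x j <;> cases hxi : x i <;> rw [hxj] at hzj hflip' <;> rw [hxi] at hzi hflip'
  · exact Or.inl ⟨(hf.1 j i).2 ⟨z, hzj, hzi, hflip'⟩, hxj.trans hxi.symm⟩
  · exact Or.inr ⟨(hf.2 j i).2 ⟨z, hzj, hzi, hflip'⟩, by simp [hxj, hxi]⟩
  · refine Or.inr ⟨(hf.2 j i).2 ⟨update z j false, update_self .., hflip', ?_⟩, by simp [hxj, hxi]⟩
    rwa [update_idem, show update z j true = z by rw [← hzj, update_eq_self]]
  · refine Or.inl ⟨(hf.1 j i).2 ⟨update z j false, update_self .., hflip', ?_⟩, hxj.trans hxi.symm⟩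
    rwa [update_idem, show update z j true = z by rw [← hzj, update_eq_self]]

theorem exists_unfrustrated_arc (hf : IsBNOn f G) {a : V → Bool} (ha : f a = a) {D : Finset V}
    {x : V → Bool} (hx : ∀ t ∉ D, x t = a t) {i : V} (hi : f x i ≠ a i) :
    ∃ j ∈ D, (G.unfrustrated a).Arc j i := by
  obtain ⟨j, hj, z, -, hzj, hzi, hflip⟩ :=
    exists_update_ne_of_ne (fun x => f x i) a D x hx (by rwa [ha])
  rw [ha] at hzi hflip
  exact ⟨j, hj, unfrustrated_arc_of_update hf hzj hzi hflip⟩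

theorem SignedDigraph.NoPositiveCycle.exists_forced [Finite V] (hG : G.NoPositiveCycle)
    (hf : IsBNOn f G) {a : V → Bool} (ha : f a = a) {D : Finset V} (hD : D.Nonempty) :
    ∃ i ∈ D, ∀ x : V → Bool, (∀ t ∉ D, x t = a t) → f x i = a i := by
  by_contra! hfree
  have harc : ∀ i ∈ (D : Set V), ∃ j ∈ (D : Set V), (G.unfrustrated a).Arc j i := fun i hi =>
    have ⟨_, hx, hxi⟩ := hfree i hi
    exists_unfrustrated_arc hf ha hx hxi
  obtain ⟨u, steps, hcycle⟩ := (G.unfrustrated a).exists_isCycle_of_forall_exists_arc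
    (Finset.coe_nonempty.mpr hD) harc
  exact hG.not_isCycle_unfrustrated a u steps hcycle

theorem SignedDigraph.NoPositiveCycle.exists_word [Finite V] (hG : G.NoPositiveCycle)
    (hf : IsBNOn f G) {a : V → Bool} (ha : f a = a) (D : Finset V) :
    ∃ w : List V, w.length = D.card ∧ ∀ x : V → Bool, (∀ t ∉ D, x t = a t) →
      wordUpdate f w x = a := by
  induction D using Finset.strongInduction with
  | H D ih =>
  rcases D.eq_empty_or_nonempty with rfl | hD
  · exact ⟨[], rfl, fun x hx => funext fun t => hx t (Finset.notMem_empty t)⟩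
  obtain ⟨i, hiD, hforced⟩ := hG.exists_forced hf ha hD
  obtain ⟨w, hw, hwa⟩ := ih (D.erase i) (Finset.erase_ssubset hiD)
  refine ⟨i :: w, by rw [List.length_cons, hw, Finset.card_erase_add_one hiD],
    fun x hx => hwa (localUpdate f i x) fun t ht => ?_⟩
  by_cases hti : t = i
  · rw [hti, localUpdate, update_self, hforced x hx]
  · rw [localUpdate, update_of_ne hti]
    exact hx t fun h => ht (Finset.mem_erase.mpr ⟨hti, h⟩)

end BooleanNetwork

/-- Proposition 8 of the paper. Let `G` be a signed digraph on `n`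
vertices without positive cycles, and let `f` be a Boolean network on `G` having a
fixed point. Then `f` has a synchronizing word of length `n`. -/
theorem statement19 {V : Type} [Fintype V] [DecidableEq V]
    (G : SignedDigraph V) (n : ℕ) (hn : Fintype.card V = n)
    (hpos : G.NoPositiveCycle)
    (f : (V → Bool) → V → Bool) (hf : IsBNOn f G)
    (hfix : ∃ x : V → Bool, f x = x) :
    ∃ w : List V, w.length = n ∧ SyncWord f w := by
  obtain ⟨a, ha⟩ := hfix
  obtain ⟨w, hw, hwa⟩ := hpos.exists_word hf ha Finset.univ
  exact ⟨w, hw.trans (Finset.card_univ.trans hn), a,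
    fun x => hwa x fun t ht => absurd (Finset.mem_univ t) ht⟩
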